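/- Let G be a group and let F_0 ⊆ F_1 ⊆ ... be an ascending chain of full families of subgroups of G satisfying: for all i ≤ r, if H, K ∈ F_r \ F_{r-1} with H ∩ K ∈ F_r \ F_{r-1} and L ∈ F_i \ F_{i-1}, then L ∩ H ∈ F_i \ F_{i-1} iff L ∩ K ∈ F_i \ F_{i-1}. Define H ~_r K iff H ∩ K ∈ F_r \ F_{r-1} for H, K ∈ F_r \ F_{r-1}. Then ~_r is an equivalence relation on F_r \ F_{r-1}. -/
import Mathlib


/-- A full family of subgroups: nonempty, closed under conjugation and under
taking subgroups. -/
def IsFullFamily {G : Type*} [Group G] (F : Set (Subgroup G)) : Prop :=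
  F.Nonempty ∧
  (∀ H ∈ F, ∀ g : G, H.map (MulAut.conj g).toMonoidHom ∈ F) ∧
  (∀ H ∈ F, ∀ H' ≤ H, H' ∈ F)

/-- The difference `F_r \ F_{r-1}`, with the convention `F_{-1} = ∅`. -/
def famDiff {G : Type*} [Group G] (F : ℕ → Set (Subgroup G)) : ℕ → Set (Subgroup G)
  | 0 => F 0
  | (r + 1) => F (r + 1) \ F r

/-- A strongly structured ascending chain of (full) families of subgroups of `G`:
an ascending chain of full families such that for all `i ≤ r`, if
`H, K ∈ F_r \ F_{r-1}` with `H ⊓ K ∈ F_r \ F_{r-1}` and `L ∈ F_i \ F_{i-1}`, then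
`L ⊓ H ∈ F_i \ F_{i-1}` iff `L ⊓ K ∈ F_i \ F_{i-1}`. -/
def SSACFS {G : Type*} [Group G] (F : ℕ → Set (Subgroup G)) : Prop :=
  (∀ r, IsFullFamily (F r)) ∧
  (∀ r, F r ⊆ F (r + 1)) ∧
  (∀ i r, i ≤ r → ∀ H K L : Subgroup G,
    H ∈ famDiff F r → K ∈ famDiff F r → H ⊓ K ∈ famDiff F r → L ∈ famDiff F i →
    (L ⊓ H ∈ famDiff F i ↔ L ⊓ K ∈ famDiff F i))

/-- For a strongly structured ascending chain of families, the relation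
`H ~_r K ↔ H ⊓ K ∈ F_r \ F_{r-1}` is reflexive, symmetric and transitive on
`F_r \ F_{r-1}`. -/
theorem ssacfs_rel_equivalence {G : Type*} [Group G] (F : ℕ → Set (Subgroup G))
    (hF : SSACFS F) (r : ℕ) :
    (∀ H ∈ famDiff F r, H ⊓ H ∈ famDiff F r) ∧
    (∀ H ∈ famDiff F r, ∀ K ∈ famDiff F r,
      H ⊓ K ∈ famDiff F r → K ⊓ H ∈ famDiff F r) ∧
    (∀ H ∈ famDiff F r, ∀ K ∈ famDiff F r, ∀ L ∈ famDiff F r,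
      H ⊓ K ∈ famDiff F r → K ⊓ L ∈ famDiff F r → H ⊓ L ∈ famDiff F r) := by
  refine ⟨fun H hH => by rwa [inf_idem], fun H hH K hK h => by rwa [inf_comm],
    fun H hH K hK L hL hHK hKL => ?_⟩
  exact (hF.2.2 r r le_rfl K L H hK hL hKL hH).mp (inf_comm H K ▸ hHK)
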